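/- arXiv:1908.02098 — 3 statements merged into one kernel-verified Lean document; each statement's English description precedes it below -/
import Mathlib

section
/- For any real number β > 1 and any integer n ≥ 1, the number of admissible words of length n in the β-expansion satisfies β^n ≤ #Σ_β^n ≤ β^(n+1)/(β-1). -/
open MeasureTheory Filter Real Set

noncomputable section

/-- The β-transformation `x ↦ βx mod 1`. -/
def bT (β x : ℝ) : ℝ := Int.fract (β * x)

/-- The digit `ε_{j+1}(x, β) = ⌊β T_β^j x⌋` (0-indexed). -/
def dig (β x : ℝ) (j : ℕ) : ℤ := ⌊β * (bT β)^[j] x⌋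

/-- A finite word is admissible if it is the initial digit string of some `x ∈ [0,1)`. -/
def Adm (β : ℝ) (w : List ℤ) : Prop :=
  ∃ x ∈ Set.Ico (0:ℝ) 1, ∀ i : Fin w.length, dig β x i = w.get i

/-- The set `Σ_β^n` of admissible words of length `n`. -/
def SigmaB (β : ℝ) (n : ℕ) : Set (List ℤ) := {w | w.length = n ∧ Adm β w}

/-- The cylinder of a word. -/
def cyl (β : ℝ) (w : List ℤ) : Set ℝ :=
  {x | x ∈ Set.Ico (0:ℝ) 1 ∧ ∀ i : Fin w.length, dig β x i = w.get i}

/-- The length of a cylinder. -/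
def cylLen (β : ℝ) (w : List ℤ) : ℝ := (volume (cyl β w)).toReal

/-- A word/cylinder is full if the cylinder has maximal length `β^{-n}`. -/
def IsFull (β : ℝ) (w : List ℤ) : Prop := cylLen β w = (β ^ w.length)⁻¹

/-- The left endpoint `Σ_j ε_j β^{-j}` of the cylinder of a word. -/
def leftpt (β : ℝ) (w : List ℤ) : ℝ :=
  ∑ i : Fin w.length, (w.get i : ℝ) / β ^ ((i : ℕ) + 1)

/-- Birkhoff (ergodic) sum `S_n f(x)`. -/
def birk (β : ℝ) (f : ℝ → ℝ) (n : ℕ) (x : ℝ) : ℝ :=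
  ∑ j ∈ Finset.range n, f ((bT β)^[j] x)

/-- The digit sequence of `1`. -/
def eps1 (β : ℝ) (j : ℕ) : ℤ := ⌊β * (bT β)^[j] 1⌋

/-- The infinite β-expansion of `1`. -/
def epsStar (β : ℝ) : ℕ → ℤ := by
  classical
  exact
  if h : ∃ m, eps1 β m ≠ 0 ∧ ∀ k, m < k → eps1 β k = 0 then
    fun j =>
      if j % (h.choose + 1) = h.choose then eps1 β h.choose - 1
      else eps1 β (j % (h.choose + 1))
  else eps1 β

/-- Strict lexicographic order on integer sequences. -/
def lexLt (a b : ℕ → ℤ) : Prop := ∃ k, (∀ j, j < k → a j = b j) ∧ a k < b k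

/-- The partition function `Σ_{w ∈ Σ_β^n} sup_{y ∈ I_n(w)} e^{S_n g(y)}`. -/
def presSum (β : ℝ) (g : ℝ → ℝ) (n : ℕ) : ℝ :=
  ∑' w : SigmaB β n, ⨆ y ∈ cyl β (w : List ℤ), Real.exp (birk β g n y)

/-- The pressure function `P(g, T_β)`. -/
def pressure (β : ℝ) (g : ℝ → ℝ) : ℝ :=
  limUnder Filter.atTop fun n : ℕ => Real.log (presSum β g n) / n

end

/-!
Every point `x ∈ [0,1)` lies within `β⁻ⁿ` to the right of the left endpoint of its own cylinder of
length `n`, so the `#Σ_β^n` intervals of length `β⁻ⁿ` at these endpoints cover `[0,1)`: this gives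
`βⁿ ≤ #Σ_β^n`. An admissible word of length `n + 1` ending in `0` is its prefix in `Σ_β^n` followed
by `0`. If it ends in a digit `d ≥ 1`, the interval of length `β⁻⁽ⁿ⁺¹⁾` just left of its left
endpoint is contained in the cylinder of the word with last digit lowered to `d - 1`; distinct words
give disjoint intervals, so there are at most `βⁿ⁺¹` of them. Hence
`#Σ_β^(n+1) ≤ #Σ_β^n + βⁿ⁺¹`, and summing the geometric series gives the upper bound.
-/

section BetaExpansion

variable {β x y : ℝ} {n : ℕ}

noncomputable def digWord (β x : ℝ) (n : ℕ) : List ℤ := List.ofFn fun i : Fin n => dig β x i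

@[simp]
lemma length_digWord : (digWord β x n).length = n := List.length_ofFn

lemma digWord_succ : digWord β x (n + 1) = digWord β x n ++ [dig β x n] := by
  rw [digWord, List.ofFn_succ', List.concat_eq_append]
  rfl

lemma digWord_length_eq_iff {w : List ℤ} :
    digWord β x w.length = w ↔ ∀ i : Fin w.length, dig β x i = w.get i := by
  conv_lhs => rhs; rw [← List.ofFn_get w]
  rw [digWord, List.ofFn_inj, funext_iff]

lemma mem_cyl_iff {w : List ℤ} : x ∈ cyl β w ↔ x ∈ Ico 0 1 ∧ digWord β x w.length = w := by
  rw [digWord_length_eq_iff]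
  rfl

lemma eq_of_mem_cyl_of_mem_cyl {w w' : List ℤ} (hw : x ∈ cyl β w) (hw' : x ∈ cyl β w')
    (hlen : w.length = w'.length) : w = w' := by
  rw [← (mem_cyl_iff.1 hw).2, ← (mem_cyl_iff.1 hw').2, hlen]

lemma sigmaB_eq_image : SigmaB β n = (digWord β · n) '' Ico 0 1 := by
  ext w
  constructor
  · rintro ⟨rfl, x, hx, hdig⟩
    exact ⟨x, hx, digWord_length_eq_iff.2 hdig⟩
  · rintro ⟨x, hx, rfl⟩
    exact ⟨length_digWord, x, hx, digWord_length_eq_iff.1 (by rw [length_digWord])⟩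

lemma digWord_mem_sigmaB (hx : x ∈ Ico 0 1) : digWord β x n ∈ SigmaB β n := by
  rw [sigmaB_eq_image]
  exact mem_image_of_mem _ hx

lemma leftpt_digWord :
    leftpt β (digWord β x n) = ∑ j ∈ Finset.range n, (dig β x j : ℝ) / β ^ (j + 1) := by
  rw [← Fin.sum_univ_eq_sum_range (fun j => (dig β x j : ℝ) / β ^ (j + 1))]
  simp only [leftpt, digWord, List.get_ofFn]
  exact Fin.sum_congr' (fun i : Fin n => (dig β x i : ℝ) / β ^ ((i : ℕ) + 1)) (by simp)

lemma leftpt_digWord_succ :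
    leftpt β (digWord β x (n + 1)) = leftpt β (digWord β x n) + dig β x n / β ^ (n + 1) := by
  simp only [leftpt_digWord, Finset.sum_range_succ]

lemma bT_mem_Ico (β x : ℝ) : bT β x ∈ Ico (0 : ℝ) 1 :=
  ⟨Int.fract_nonneg _, Int.fract_lt_one _⟩

lemma iterate_bT_mem_Ico (hx : x ∈ Ico (0 : ℝ) 1) : ∀ j, (bT β)^[j] x ∈ Ico (0 : ℝ) 1
  | 0 => hx
  | j + 1 => by
    rw [Function.iterate_succ_apply']
    exact bT_mem_Ico β _

lemma dig_nonneg (hβ : 0 ≤ β) (hx : x ∈ Ico (0 : ℝ) 1) (j : ℕ) : 0 ≤ dig β x j :=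
  Int.floor_nonneg.2 (mul_nonneg hβ (iterate_bT_mem_Ico hx j).1)

lemma dig_lt (hβ : 0 < β) (hx : x ∈ Ico (0 : ℝ) 1) (j : ℕ) : (dig β x j : ℝ) < β :=
  (Int.floor_le _).trans_lt (mul_lt_of_lt_one_right hβ (iterate_bT_mem_Ico hx j).2)

lemma leftpt_digWord_nonneg (hβ : 0 ≤ β) (hx : x ∈ Ico (0 : ℝ) 1) :
    0 ≤ leftpt β (digWord β x n) := by
  rw [leftpt_digWord]
  exact Finset.sum_nonneg fun j _ =>
    div_nonneg (Int.cast_nonneg (dig_nonneg hβ hx j)) (pow_nonneg hβ _)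

lemma iterate_bT_eq (hβ : β ≠ 0) (x : ℝ) :
    ∀ n, (bT β)^[n] x = β ^ n * (x - leftpt β (digWord β x n))
  | 0 => by simp [leftpt_digWord]
  | n + 1 => by
    rw [Function.iterate_succ_apply', leftpt_digWord_succ]
    change β * _ - (dig β x n : ℝ) = _
    rw [iterate_bT_eq hβ x n]
    field_simp
    ring

lemma dig_eq_floor (hβ : β ≠ 0) (x : ℝ) (n : ℕ) :
    dig β x n = ⌊β ^ (n + 1) * (x - leftpt β (digWord β x n))⌋ := by
  rw [dig, iterate_bT_eq hβ, ← mul_assoc, ← pow_succ']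

lemma mem_Ico_leftpt_digWord (hβ : 0 < β) (hx : x ∈ Ico (0 : ℝ) 1) (n : ℕ) :
    x ∈ Ico (leftpt β (digWord β x n)) (leftpt β (digWord β x n) + (β ^ n)⁻¹) := by
  have h := iterate_bT_mem_Ico (β := β) hx n
  rw [iterate_bT_eq hβ.ne'] at h
  have hp : 0 < β ^ n := by positivity
  constructor
  · linarith [(mul_nonneg_iff_of_pos_left hp).1 h.1]
  · rw [← sub_lt_iff_lt_add', ← one_div, lt_div_iff₀ hp, mul_comm]
    exact h.2

lemma digWord_eq_of_mem_Icc (hβ : 0 < β) (hx : x ∈ Ico (0 : ℝ) 1) :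
    ∀ {n}, y ∈ Icc (leftpt β (digWord β x n)) x → digWord β y n = digWord β x n
  | 0, _ => rfl
  | n + 1, hy => by
    have hp : 0 < β ^ (n + 1) := by positivity
    have hd : (0 : ℝ) ≤ dig β x n / β ^ (n + 1) :=
      div_nonneg (Int.cast_nonneg (dig_nonneg hβ.le hx n)) hp.le
    rw [leftpt_digWord_succ] at hy
    have hpre := digWord_eq_of_mem_Icc hβ hx ⟨by linarith [hy.1], hy.2⟩
    have hdig : dig β y n = dig β x n := by
      rw [dig_eq_floor hβ.ne' y, hpre]
      refine le_antisymm ?_ (Int.le_floor.2 ?_)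
      · rw [dig_eq_floor hβ.ne' x]
        exact Int.floor_mono (by gcongr; exact hy.2)
      · rw [← div_le_iff₀' hp]
        linarith [hy.1]
    rw [digWord_succ, digWord_succ, hpre, hdig]

lemma mem_cyl_of_mem_Ico_sub (hβ : 0 < β) (hx : x ∈ Ico (0 : ℝ) 1) (hd : 0 < dig β x n)
    (hy : y ∈ Ico (leftpt β (digWord β x (n + 1)) - (β ^ (n + 1))⁻¹)
      (leftpt β (digWord β x (n + 1)))) :
    y ∈ cyl β (digWord β x n ++ [dig β x n - 1]) := by
  have hd1 : (1 : ℝ) ≤ dig β x n := by exact_mod_cast hd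
  set L := leftpt β (digWord β x n)
  set d : ℝ := (dig β x n : ℝ)
  have hp : 0 < β ^ (n + 1) := by positivity
  have hxL := (mem_Ico_leftpt_digWord hβ hx (n + 1)).1
  rw [leftpt_digWord_succ] at hy hxL
  have hlow : d - 1 ≤ β ^ (n + 1) * (y - L) := by
    rw [← div_le_iff₀' hp, sub_div, one_div]
    linarith [hy.1]
  have hup : β ^ (n + 1) * (y - L) < d := by
    rw [← lt_div_iff₀' hp]
    linarith [hy.2]
  have hLy : L ≤ y := by nlinarith
  have hyx : y ≤ x := hy.2.le.trans hxL
  have hpre := digWord_eq_of_mem_Icc hβ hx ⟨hLy, hyx⟩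
  have hdig : dig β y n = dig β x n - 1 := by
    rw [dig_eq_floor hβ.ne' y, hpre, Int.floor_eq_iff]
    push_cast
    exact ⟨hlow, by linarith⟩
  refine mem_cyl_iff.2 ⟨⟨(leftpt_digWord_nonneg hβ.le hx).trans hLy, hyx.trans_lt hx.2⟩, ?_⟩
  simp only [List.length_append, length_digWord, List.length_singleton]
  rw [digWord_succ, hpre, hdig]

lemma sigmaB_finite (hβ : 0 < β) (n : ℕ) : (SigmaB β n).Finite := by
  refine (Set.finite_range fun f : Fin n → Finset.Ico (0 : ℤ) ⌈β⌉ =>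
    List.ofFn fun i => (f i : ℤ)).subset ?_
  rw [sigmaB_eq_image]
  rintro _ ⟨x, hx, rfl⟩
  exact ⟨fun i => ⟨dig β x i,
    Finset.mem_Ico.2 ⟨dig_nonneg hβ.le hx i, Int.lt_ceil.2 (dig_lt hβ hx i)⟩⟩, rfl⟩

end BetaExpansion

section IntervalCounting

variable {ι : Type*} (s : Finset ι) (a : ι → ℝ) {δ : ℝ}

lemma one_le_card_mul_of_Ico_subset_biUnion (h : Ico (0 : ℝ) 1 ⊆ ⋃ i ∈ s, Ico (a i) (a i + δ)) :
    1 ≤ s.card * δ := by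
  refine ENNReal.one_le_ofReal.1 ?_
  calc 1 = volume (Ico (0 : ℝ) 1) := by simp
    _ ≤ volume (⋃ i ∈ s, Ico (a i) (a i + δ)) := measure_mono h
    _ ≤ ∑ i ∈ s, volume (Ico (a i) (a i + δ)) := measure_biUnion_finset_le s _
    _ = ENNReal.ofReal (s.card * δ) := by
      simp [Real.volume_Ico, ENNReal.ofReal_mul]

lemma card_mul_le_one_of_pairwiseDisjoint_Ico (hsub : ∀ i ∈ s, Ico (a i) (a i + δ) ⊆ Ico 0 1)
    (hdisj : (s : Set ι).PairwiseDisjoint fun i => Ico (a i) (a i + δ)) :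
    s.card * δ ≤ 1 := by
  refine ENNReal.ofReal_le_one.1 ?_
  calc ENNReal.ofReal (s.card * δ) = ∑ i ∈ s, volume (Ico (a i) (a i + δ)) := by
        simp [Real.volume_Ico, ENNReal.ofReal_mul]
    _ = volume (⋃ i ∈ s, Ico (a i) (a i + δ)) :=
        (measure_biUnion_finset hdisj fun _ _ => measurableSet_Ico).symm
    _ ≤ volume (Ico (0 : ℝ) 1) := measure_mono (iUnion₂_subset hsub)
    _ = 1 := by simp

end IntervalCounting

section Counting

variable {β : ℝ}

lemma pow_le_ncard_sigmaB (hβ : 0 < β) (n : ℕ) : β ^ n ≤ (SigmaB β n).ncard := by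
  have hfin := sigmaB_finite hβ n
  have hcover : Ico (0 : ℝ) 1 ⊆ ⋃ w ∈ hfin.toFinset, Ico (leftpt β w) (leftpt β w + (β ^ n)⁻¹) :=
    fun x hx => mem_biUnion (hfin.mem_toFinset.2 (digWord_mem_sigmaB hx))
      (mem_Ico_leftpt_digWord hβ hx n)
  have h := one_le_card_mul_of_Ico_subset_biUnion _ _ hcover
  rw [le_mul_inv_iff₀ (by positivity), one_mul] at h
  rwa [Set.ncard_eq_toFinset_card _ hfin]

lemma ncard_digWord_image_dig_pos_le (hβ : 0 < β) (n : ℕ) :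
    ((digWord β · (n + 1)) '' {x ∈ Ico 0 1 | 0 < dig β x n}).ncard ≤ β ^ (n + 1) := by
  set δ := (β ^ (n + 1))⁻¹
  have hfin : ((digWord β · (n + 1)) '' {x ∈ Ico 0 1 | 0 < dig β x n}).Finite :=
    (sigmaB_finite hβ (n + 1)).subset (sigmaB_eq_image ▸ image_mono (sep_subset _ _))
  have hsub : ∀ w ∈ hfin.toFinset, Ico (leftpt β w - δ) (leftpt β w - δ + δ) ⊆ Ico 0 1 := by
    intro w hw y hy
    obtain ⟨x, hx, rfl⟩ := hfin.mem_toFinset.1 hw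
    rw [sub_add_cancel] at hy
    exact (mem_cyl_of_mem_Ico_sub hβ hx.1 hx.2 hy).1
  have hdisj : (hfin.toFinset : Set (List ℤ)).PairwiseDisjoint
      fun w => Ico (leftpt β w - δ) (leftpt β w - δ + δ) := by
    rintro w hw w' hw' hne
    obtain ⟨x, hx, rfl⟩ := hfin.mem_toFinset.1 hw
    obtain ⟨x', hx', rfl⟩ := hfin.mem_toFinset.1 hw'
    refine Set.disjoint_left.2 fun y hy hy' => hne ?_
    dsimp only at hy hy' ⊢
    rw [sub_add_cancel] at hy hy'
    have hlow := eq_of_mem_cyl_of_mem_cyl (mem_cyl_of_mem_Ico_sub hβ hx.1 hx.2 hy)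
      (mem_cyl_of_mem_Ico_sub hβ hx'.1 hx'.2 hy') (by simp)
    obtain ⟨hpre, hlast⟩ := List.append_inj hlow (by simp)
    rw [digWord_succ, digWord_succ, hpre, sub_left_inj.1 (List.singleton_inj.1 hlast)]
  have h := card_mul_le_one_of_pairwiseDisjoint_Ico _ _ hsub hdisj
  rw [mul_inv_le_iff₀ (by positivity), one_mul] at h
  rwa [Set.ncard_eq_toFinset_card _ hfin]

lemma ncard_sigmaB_succ_le (hβ : 0 < β) (n : ℕ) :
    ((SigmaB β (n + 1)).ncard : ℝ) ≤ (SigmaB β n).ncard + β ^ (n + 1) := by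
  set P := (digWord β · (n + 1)) '' {x ∈ Ico 0 1 | 0 < dig β x n}
  have hsplit : SigmaB β (n + 1) ⊆ (· ++ [0]) '' SigmaB β n ∪ P := by
    rw [sigmaB_eq_image]
    rintro _ ⟨x, hx, rfl⟩
    rcases (dig_nonneg hβ.le hx n).eq_or_lt with h0 | hpos
    · exact Or.inl ⟨digWord β x n, digWord_mem_sigmaB hx, by dsimp only; rw [digWord_succ, ← h0]⟩
    · exact Or.inr ⟨x, ⟨hx, hpos⟩, rfl⟩
  have hfin := sigmaB_finite hβ n
  have hcard : (SigmaB β (n + 1)).ncard ≤ (SigmaB β n).ncard + P.ncard :=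
    calc (SigmaB β (n + 1)).ncard ≤ ((· ++ [0]) '' SigmaB β n ∪ P).ncard :=
          ncard_le_ncard hsplit ((hfin.image _).union ((sigmaB_finite hβ (n + 1)).subset
            (sigmaB_eq_image ▸ image_mono (sep_subset _ _))))
      _ ≤ ((· ++ [0]) '' SigmaB β n).ncard + P.ncard := ncard_union_le _ _
      _ ≤ (SigmaB β n).ncard + P.ncard := Nat.add_le_add_right (ncard_image_le hfin) _
  calc ((SigmaB β (n + 1)).ncard : ℝ) ≤ (SigmaB β n).ncard + P.ncard := by exact_mod_cast hcard
    _ ≤ (SigmaB β n).ncard + β ^ (n + 1) := by gcongr; exact ncard_digWord_image_dig_pos_le hβ n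

lemma ncard_sigmaB_le_geom_sum (hβ : 0 < β) :
    ∀ n, ((SigmaB β n).ncard : ℝ) ≤ ∑ k ∈ Finset.range (n + 1), β ^ k
  | 0 => by
    have h : SigmaB β 0 ⊆ {[]} := fun w hw => List.length_eq_zero_iff.1 hw.1
    simpa using ncard_le_ncard h
  | n + 1 => by
    rw [Finset.sum_range_succ]
    linarith [ncard_sigmaB_succ_le hβ n, ncard_sigmaB_le_geom_sum hβ n]

end Counting

theorem stmt0_general (β : ℝ) (hβ : 1 < β) (n : ℕ) :
    β ^ n ≤ ((SigmaB β n).ncard : ℝ) ∧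
      ((SigmaB β n).ncard : ℝ) ≤ β ^ (n + 1) / (β - 1) := by
  have hβ0 : 0 < β := zero_lt_one.trans hβ
  refine ⟨pow_le_ncard_sigmaB hβ0 n, ?_⟩
  calc ((SigmaB β n).ncard : ℝ) ≤ ∑ k ∈ Finset.range (n + 1), β ^ k :=
        ncard_sigmaB_le_geom_sum hβ0 n
    _ = (β ^ (n + 1) - 1) / (β - 1) := geom_sum_eq hβ.ne' (n + 1)
    _ ≤ β ^ (n + 1) / (β - 1) := by
        gcongr
        linarith

theorem stmt0 (β : ℝ) (hβ : 1 < β) (n : ℕ) (hn : 1 ≤ n) :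
    β ^ n ≤ ((SigmaB β n).ncard : ℝ) ∧
      ((SigmaB β n).ncard : ℝ) ≤ β ^ (n + 1) / (β - 1) :=
  stmt0_general β hβ n
end

section
/- A cylinder I_n(ε_1,…,ε_n) is full (i.e., has length exactly β^{-n}) if and only if for every m ≥ 1 and every admissible word (ε'_1,…,ε'_m) ∈ Σ_β^m, the concatenation (ε_1,…,ε_n,ε'_1,…,ε'_m) is admissible. -/
open MeasureTheory Filter Real Set

/-!
Peeling off the first digit, `x ∈ I(a :: w)` iff `⌊βx⌋ = a` and `T_β x ∈ I(w)`; by induction on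
the word, `I(w)` lies in `[s, s + β^{-n})` with `s = leftpt β w`, contains `[s, z]` with each of
its points `z`, and `T_β^n x = β^n (x - s)` on it. Hence `I(w)` is full iff it is all of
`[s, s + β^{-n})`, i.e. iff `J = T_β^n (I(w))` is all of `[0,1)`, while `w ++ v` is admissible iff
`J` meets `I(v)`. A downward closed set `J` meeting every nonempty cylinder is `[0,1)`, because
cylinders of length `m` have diameter less than `β^{-m}`.
-/

lemma volume_eq_ofReal_iff_eq_Ico {S : Set ℝ} {a b : ℝ} (hSab : S ⊆ Ico a b)
    (hS : ∀ z ∈ S, Icc a z ⊆ S) : volume S = ENNReal.ofReal (b - a) ↔ S = Ico a b := by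
  refine ⟨fun hvol => hSab.antisymm fun y hy => ?_, fun h => h ▸ Real.volume_Ico⟩
  by_contra hyS
  have hSy : S ⊆ Ico a y := fun z hz =>
    ⟨(hSab hz).1, lt_of_not_ge fun hyz => hyS (hS z hz ⟨hy.1, hyz⟩)⟩
  have hle := (measure_mono hSy).trans_eq Real.volume_Ico
  rw [hvol, ENNReal.ofReal_le_ofReal_iff (sub_nonneg.mpr hy.1)] at hle
  linarith [hy.2]

lemma add_div_mem_Ico_iff {s c t : ℝ} (hc : 0 < c) :
    s + t / c ∈ Ico s (s + c⁻¹) ↔ t ∈ Ico 0 1 := by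
  rw [mem_Ico, mem_Ico, le_add_iff_nonneg_right, add_lt_add_iff_left, le_div_iff₀ hc, zero_mul,
    ← one_div, div_lt_div_iff_of_pos_right hc]

namespace BetaExpansion

open Finset in
lemma leftpt_cons (β : ℝ) (a : ℤ) (w : List ℤ) (hβ : β ≠ 0) :
    leftpt β (a :: w) = (a + leftpt β w) / β := by
  simp only [leftpt, List.length_cons, Fin.sum_univ_succ, List.get_eq_getElem, Fin.val_zero,
    Fin.val_succ, List.getElem_cons_zero, List.getElem_cons_succ, add_div, sum_div, pow_succ]
  field_simp

@[simp]
lemma leftpt_nil (β : ℝ) : leftpt β [] = 0 := by simp [leftpt]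

@[simp]
lemma cyl_nil (β : ℝ) : cyl β [] = Ico 0 1 := by ext; simp [cyl]

lemma bT_eq (β x : ℝ) : bT β x = β * x - ⌊β * x⌋ := rfl

lemma bT_mem_Ico (β x : ℝ) : bT β x ∈ Ico 0 1 := ⟨Int.fract_nonneg _, Int.fract_lt_one _⟩

lemma mem_cyl_cons {β x : ℝ} {a : ℤ} {w : List ℤ} :
    x ∈ cyl β (a :: w) ↔ x ∈ Ico 0 1 ∧ ⌊β * x⌋ = a ∧ bT β x ∈ cyl β w := by
  simp only [cyl, mem_ofPred_eq, List.length_cons, Fin.forall_fin_succ, bT_mem_Ico, true_and]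
  simp [dig]

lemma cyl_subset_Ico {β : ℝ} (hβ : 0 < β) (w : List ℤ) :
    cyl β w ⊆ Ico (leftpt β w) (leftpt β w + (β ^ w.length)⁻¹) := by
  induction w with
  | nil => simp
  | cons a w ih =>
    intro x hx
    obtain ⟨-, ha, hT⟩ := mem_cyl_cons.mp hx
    obtain ⟨h1, h2⟩ := ih hT
    rw [bT_eq, ha] at h1 h2
    rw [leftpt_cons β a w hβ.ne', List.length_cons, pow_succ, mul_inv]
    constructor
    · rw [div_le_iff₀ hβ]; linarith
    · rw [show (a + leftpt β w) / β + (β ^ w.length)⁻¹ * β⁻¹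
          = (a + leftpt β w + (β ^ w.length)⁻¹) / β by ring, lt_div_iff₀ hβ]
      linarith

lemma iterate_bT_of_mem_cyl {β : ℝ} (hβ : β ≠ 0) {w : List ℤ} {x : ℝ} (hx : x ∈ cyl β w) :
    (bT β)^[w.length] x = β ^ w.length * (x - leftpt β w) := by
  induction w generalizing x with
  | nil => simp
  | cons a w ih =>
    obtain ⟨-, ha, hT⟩ := mem_cyl_cons.mp hx
    rw [List.length_cons, Function.iterate_succ_apply, ih hT, bT_eq, ha, leftpt_cons β a w hβ]
    field_simp
    ring

lemma leftpt_nonneg {β : ℝ} (hβ : 0 < β) {w : List ℤ} {z : ℝ} (hz : z ∈ cyl β w) :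
    0 ≤ leftpt β w := by
  induction w generalizing z with
  | nil => simp
  | cons a w ih =>
    obtain ⟨hz01, ha, hT⟩ := mem_cyl_cons.mp hz
    have ha0 : (0 : ℝ) ≤ a := by
      rw [← ha]; exact_mod_cast Int.floor_nonneg.mpr (mul_nonneg hβ.le hz01.1)
    rw [leftpt_cons β a w hβ.ne']
    exact div_nonneg (add_nonneg ha0 (ih hT)) hβ.le

lemma Icc_subset_cyl {β : ℝ} (hβ : 0 < β) {w : List ℤ} {z : ℝ} (hz : z ∈ cyl β w) :
    Icc (leftpt β w) z ⊆ cyl β w := by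
  induction w generalizing z with
  | nil =>
    simp only [leftpt_nil, cyl_nil] at hz ⊢
    exact fun y hy => ⟨hy.1, hy.2.trans_lt hz.2⟩
  | cons a w ih =>
    intro y ⟨hsy, hyz⟩
    obtain ⟨hz01, ha, hT⟩ := mem_cyl_cons.mp hz
    have hs0 := leftpt_nonneg hβ hT
    have hy0 := (leftpt_nonneg hβ hz).trans hsy
    rw [leftpt_cons β a w hβ.ne', div_le_iff₀' hβ] at hsy
    have hza : β * z < a + 1 := by rw [← ha]; exact Int.lt_floor_add_one _
    have hya : ⌊β * y⌋ = a := by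
      rw [Int.floor_eq_iff]
      constructor <;> nlinarith
    refine mem_cyl_cons.mpr ⟨⟨hy0, hyz.trans_lt hz01.2⟩, hya, ih hT ⟨?_, ?_⟩⟩
    · rw [bT_eq, hya]; linarith
    · rw [bT_eq, bT_eq, hya, ha]; nlinarith

lemma mem_cyl_append {β x : ℝ} {w v : List ℤ} :
    x ∈ cyl β (w ++ v) ↔ x ∈ cyl β w ∧ (bT β)^[w.length] x ∈ cyl β v := by
  induction w generalizing x with
  | nil => simpa using fun hx => hx.1
  | cons a w ih =>
    simp only [List.cons_append, mem_cyl_cons, ih, List.length_cons, Function.iterate_succ_apply]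
    tauto

lemma mem_cyl_ofFn_dig {β x : ℝ} (hx : x ∈ Ico 0 1) (L : ℕ) :
    x ∈ cyl β (List.ofFn fun j : Fin L => dig β x j) :=
  ⟨hx, fun i => by simp⟩

lemma isFull_iff_cyl_eq_Ico {β : ℝ} (hβ : 0 < β) (w : List ℤ) :
    IsFull β w ↔ cyl β w = Ico (leftpt β w) (leftpt β w + (β ^ w.length)⁻¹) := by
  have hfin : volume (cyl β w) ≠ ⊤ :=
    ((measure_mono (cyl_subset_Ico hβ w)).trans_lt measure_Ico_lt_top).ne
  rw [← volume_eq_ofReal_iff_eq_Ico (cyl_subset_Ico hβ w) fun z hz => Icc_subset_cyl hβ hz,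
    add_sub_cancel_left, IsFull, cylLen, ← ENNReal.toReal_eq_toReal_iff' hfin ENNReal.ofReal_ne_top,
    ENNReal.toReal_ofReal (by positivity)]

lemma Ico_subset_of_inter_cyl_nonempty {β : ℝ} (hβ : 1 < β) {S : Set ℝ}
    (hS : ∀ t ∈ S, Icc 0 t ⊆ S)
    (hmeet : ∀ v : List ℤ, 1 ≤ v.length → Adm β v → (S ∩ cyl β v).Nonempty) :
    Ico 0 1 ⊆ S := by
  intro t ht
  have hβ0 : 0 < β := one_pos.trans hβ
  obtain ⟨L, hL⟩ := exists_pow_lt_of_lt_one (by linarith [ht.2] : 0 < (1 - t) / 2)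
    (inv_lt_one_of_one_lt₀ hβ)
  set y := (t + 1) / 2 with hy_def
  have hy : y ∈ Ico 0 1 := ⟨by linarith [ht.1], by linarith [ht.2]⟩
  set v := List.ofFn fun j : Fin (L + 1) => dig β y j
  obtain ⟨t', ht'S, ht'v⟩ := hmeet v (by simp [v]) ⟨y, mem_cyl_ofFn_dig hy _⟩
  have hy' := cyl_subset_Ico hβ0 v (mem_cyl_ofFn_dig hy _)
  have ht' := cyl_subset_Ico hβ0 v ht'v
  have hlen : (β ^ v.length)⁻¹ ≤ β⁻¹ ^ L := by
    rw [List.length_ofFn, ← inv_pow]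
    exact pow_le_pow_of_le_one (by positivity) (inv_le_one_of_one_le₀ hβ.le) L.le_succ
  exact hS t' ht'S ⟨ht.1, by linarith [hy'.2, ht'.1]⟩

end BetaExpansion

open BetaExpansion in
theorem stmt4_general (β : ℝ) (hβ : 1 < β) (w : List ℤ) :
    IsFull β w ↔ ∀ v : List ℤ, 1 ≤ v.length → Adm β v → Adm β (w ++ v) := by
  have hβ0 : 0 < β := one_pos.trans hβ
  set s := leftpt β w
  have hpn : 0 < β ^ w.length := by positivity
  rw [isFull_iff_cyl_eq_Ico hβ0]
  constructor
  · rintro hcyl v - ⟨x, hx⟩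
    have hz : s + x / β ^ w.length ∈ cyl β w := hcyl ▸ (add_div_mem_Ico_iff hpn).mpr hx.1
    refine ⟨s + x / β ^ w.length, mem_cyl_append.mpr ⟨hz, ?_⟩⟩
    rwa [iterate_bT_of_mem_cyl hβ0.ne' hz, add_sub_cancel_left, mul_div_cancel₀ _ hpn.ne']
  · intro H
    set J := {t | s + t / β ^ w.length ∈ cyl β w}
    have hJ_down : ∀ t ∈ J, Icc 0 t ⊆ J := fun t ht u hu =>
      Icc_subset_cyl hβ0 ht ⟨le_add_of_nonneg_right (div_nonneg hu.1 hpn.le), by gcongr; exact hu.2⟩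
    have hJ_meet : ∀ v : List ℤ, 1 ≤ v.length → Adm β v → (J ∩ cyl β v).Nonempty := by
      intro v hv hadm
      obtain ⟨z, hz⟩ := H v hv hadm
      obtain ⟨hzw, hzv⟩ := mem_cyl_append.mp hz
      refine ⟨_, ?_, hzv⟩
      rwa [mem_ofPred_eq, iterate_bT_of_mem_cyl hβ0.ne' hzw, mul_div_cancel_left₀ _ hpn.ne',
        add_sub_cancel]
    refine (cyl_subset_Ico hβ0 w).antisymm fun u hu => ?_
    have hu' : s + β ^ w.length * (u - s) / β ^ w.length = u := by
      rw [mul_div_cancel_left₀ _ hpn.ne', add_sub_cancel]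
    rw [← hu'] at hu ⊢
    exact Ico_subset_of_inter_cyl_nonempty hβ hJ_down hJ_meet ((add_div_mem_Ico_iff hpn).mp hu)

theorem stmt4 (β : ℝ) (hβ : 1 < β) (w : List ℤ) (hw : Adm β w) :
    IsFull β w ↔ ∀ v : List ℤ, 1 ≤ v.length → Adm β v → Adm β (w ++ v) :=
  stmt4_general β hβ w
end

section
/- For β > 1, any interval J ⊆ [0,1) of length β^{-l} with l ≥ 1 can be covered by at most 2(l+1) cylinders of order l. -/
open MeasureTheory Filter Real Set

/-!
Each `x ∈ [a, b)` shares its first `l` digits with the left endpoint `∑_{j<l} ε_{j+1}(x) β^{-(j+1)}`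
of its cylinder, a zero of `T_β^l` in `(x - β^{-l}, x]`. So the cylinders meeting `[a, b)` are
indexed by zeros of `T_β^l` in `[a - β^{-l}, a) ∪ [a, b)`, and an interval of length `β^{-l}`
contains at most `l + 1` of them: `⌊β y⌋` takes at most two values on it; on the lower piece `T_β`
is an affine bijection onto an interval of length `β^{-(l-1)}`, and it maps the upper piece into
`[0, β^{-(l-1)})`, where `T_β^{l-1}` is multiplication by `β^{l-1}` and so vanishes only at `0`.
-/

open Function

namespace BetaTransformation

variable {β : ℝ}

lemma bT_eq_sub_floor (x : ℝ) : bT β x = β * x - ⌊β * x⌋ := rfl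

lemma bT_mem_Ico (x : ℝ) : bT β x ∈ Ico (0 : ℝ) 1 := ⟨Int.fract_nonneg _, Int.fract_lt_one _⟩

lemma iterate_bT_mem_Ico {x : ℝ} (hx : x ∈ Ico (0 : ℝ) 1) :
    ∀ n : ℕ, (bT β)^[n] x ∈ Ico (0 : ℝ) 1
  | 0 => hx
  | n + 1 => by
    rw [iterate_succ_apply']
    exact bT_mem_Ico _

lemma dig_succ (x : ℝ) (j : ℕ) : dig β x (j + 1) = dig β (bT β x) j := by
  rw [dig, dig, iterate_succ_apply]

lemma dig_nonneg (hβ : 0 < β) {x : ℝ} (hx : x ∈ Ico (0 : ℝ) 1) (j : ℕ) : 0 ≤ dig β x j :=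
  Int.floor_nonneg.2 (mul_nonneg hβ.le (iterate_bT_mem_Ico hx j).1)

/-- The left endpoint of the order-`n` cylinder containing `x`. -/
noncomputable def partialExp (β : ℝ) (n : ℕ) (x : ℝ) : ℝ :=
  ∑ j ∈ Finset.range n, (dig β x j : ℝ) / β ^ (j + 1)

lemma partialExp_congr {x y : ℝ} {n : ℕ} (h : ∀ i < n, dig β x i = dig β y i) :
    partialExp β n x = partialExp β n y :=
  Finset.sum_congr rfl fun j hj => by rw [h j (Finset.mem_range.1 hj)]

lemma partialExp_succ (x : ℝ) (n : ℕ) :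
    partialExp β (n + 1) x = (dig β x 0 + partialExp β n (bT β x)) / β := by
  rw [partialExp, Finset.sum_range_succ', add_div, partialExp, Finset.sum_div, add_comm]
  congr 1
  · simp
  · exact Finset.sum_congr rfl fun j _ => by rw [dig_succ, pow_succ]; ring

lemma partialExp_add_iterate_div (hβ : β ≠ 0) (n : ℕ) (x : ℝ) :
    partialExp β n x + (bT β)^[n] x / β ^ n = x := by
  induction n generalizing x with
  | zero => simp [partialExp]
  | succ n ih =>
    calc partialExp β (n + 1) x + (bT β)^[n + 1] x / β ^ (n + 1)
        = (dig β x 0 + (partialExp β n (bT β x) + (bT β)^[n] (bT β x) / β ^ n)) / β := by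
          rw [partialExp_succ, iterate_succ_apply, pow_succ]
          field_simp
          ring
      _ = x := by
          rw [ih, bT_eq_sub_floor, dig, iterate_zero_apply]
          field_simp
          ring

lemma partialExp_nonneg (hβ : 0 < β) {x : ℝ} (hx : x ∈ Ico (0 : ℝ) 1) (n : ℕ) :
    0 ≤ partialExp β n x :=
  Finset.sum_nonneg fun j _ => div_nonneg (Int.cast_nonneg (dig_nonneg hβ hx j)) (by positivity)

lemma partialExp_le (hβ : 0 < β) {x : ℝ} (hx : x ∈ Ico (0 : ℝ) 1) (n : ℕ) :
    partialExp β n x ≤ x := by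
  have := partialExp_add_iterate_div hβ.ne' n x
  have : 0 ≤ (bT β)^[n] x / β ^ n := div_nonneg (iterate_bT_mem_Ico hx n).1 (by positivity)
  linarith

lemma sub_partialExp_lt (hβ : 0 < β) {x : ℝ} (hx : x ∈ Ico (0 : ℝ) 1) (n : ℕ) :
    x - partialExp β n x < (β ^ n)⁻¹ := by
  have hsub : x - partialExp β n x = (bT β)^[n] x * (β ^ n)⁻¹ := by
    linarith [partialExp_add_iterate_div hβ.ne' n x, div_eq_mul_inv ((bT β)^[n] x) (β ^ n)]
  rw [hsub]
  exact mul_lt_of_lt_one_left (by positivity) (iterate_bT_mem_Ico hx n).2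

lemma dig_partialExp (hβ : 0 < β) (x : ℝ) {n i : ℕ} (hi : i < n) :
    dig β (partialExp β n x) i = dig β x i := by
  induction n generalizing x i with
  | zero => exact absurd hi (Nat.not_lt_zero i)
  | succ n ih =>
    set t := partialExp β n (bT β x)
    have ht : t ∈ Ico (0 : ℝ) 1 :=
      ⟨partialExp_nonneg hβ (bT_mem_Ico x) n,
        (partialExp_le hβ (bT_mem_Ico x) n).trans_lt (bT_mem_Ico x).2⟩
    have hmul : β * partialExp β (n + 1) x = dig β x 0 + t := by
      rw [partialExp_succ, mul_div_cancel₀ _ hβ.ne']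
    have hfloor : ⌊β * partialExp β (n + 1) x⌋ = dig β x 0 := by
      rw [hmul, Int.floor_intCast_add, Int.floor_eq_zero_iff.2 ht, add_zero]
    cases i with
    | zero => exact hfloor
    | succ i =>
      have hT : bT β (partialExp β (n + 1) x) = t := by
        rw [bT_eq_sub_floor, hfloor, hmul]
        ring
      rw [dig_succ, dig_succ, hT]
      exact ih _ (Nat.succ_lt_succ_iff.1 hi)

lemma iterate_bT_partialExp (hβ : 0 < β) (n : ℕ) (x : ℝ) :
    (bT β)^[n] (partialExp β n x) = 0 := by
  have h := partialExp_add_iterate_div hβ.ne' n (partialExp β n x)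
  rw [partialExp_congr fun i hi => dig_partialExp hβ x hi, add_eq_left,
    div_eq_zero_iff] at h
  exact h.resolve_right (by positivity)

lemma iterate_bT_of_pow_mul_lt_one (hβ : 1 ≤ β) {t : ℝ} (ht : 0 ≤ t) :
    ∀ {n : ℕ}, β ^ n * t < 1 → (bT β)^[n] t = β ^ n * t
  | 0, _ => by simp
  | n + 1, h => by
    have hn : β ^ n * t < 1 :=
      (mul_le_mul_of_nonneg_right (pow_le_pow_right₀ hβ n.le_succ) ht).trans_lt h
    rw [iterate_succ_apply', iterate_bT_of_pow_mul_lt_one hβ ht hn, bT, ← mul_assoc, ← pow_succ',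
      Int.fract_eq_self.2 ⟨by positivity, h⟩]

lemma eq_zero_of_iterate_bT_eq_zero (hβ : 1 ≤ β) {n : ℕ} {t : ℝ} (ht : 0 ≤ t)
    (hlt : β ^ n * t < 1) (h : (bT β)^[n] t = 0) : t = 0 := by
  rw [iterate_bT_of_pow_mul_lt_one hβ ht hlt] at h
  exact (mul_eq_zero.1 h).resolve_left (pow_pos (zero_lt_one.trans_le hβ) n).ne'

theorem encard_zeros_iterate_bT_le (hβ : 1 ≤ β) (n : ℕ) {a b : ℝ} (hab : b - a ≤ (β ^ n)⁻¹) :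
    {y ∈ Ico a b | (bT β)^[n] y = 0}.encard ≤ n + 1 := by
  have hβ0 : 0 < β := zero_lt_one.trans_le hβ
  induction n generalizing a b with
  | zero =>
    calc _ ≤ ({0} : Set ℝ).encard := encard_le_encard fun y hy => hy.2
      _ = 0 + 1 := by simp
  | succ n ih =>
    set d := ⌊β * a⌋
    have hgap : (β * b - d) - (β * a - d) ≤ (β ^ n)⁻¹ := by
      calc (β * b - d) - (β * a - d) = β * (b - a) := by ring
        _ ≤ β * (β ^ (n + 1))⁻¹ := by gcongr
        _ = (β ^ n)⁻¹ := by rw [pow_succ', mul_inv, mul_inv_cancel_left₀ hβ0.ne']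
    have hsub : {y ∈ Ico a b | (bT β)^[n + 1] y = 0} ⊆
        (fun t => (t + d) / β) '' {t ∈ Ico (β * a - d) (β * b - d) | (bT β)^[n] t = 0} ∪
          {(d + 1 : ℝ) / β} := by
      rintro y ⟨⟨hay, hyb⟩, hy⟩
      rw [iterate_succ_apply] at hy
      have hβy : β * y < β * b := mul_lt_mul_of_pos_left hyb hβ0
      have hd : (β * a : ℝ) < d + 1 := Int.lt_floor_add_one _
      have hlo : d ≤ ⌊β * y⌋ := Int.floor_le_floor (by gcongr)
      have hhi : ⌊β * y⌋ < d + 2 := Int.floor_lt.2 <| by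
        push_cast
        linarith [inv_le_one_of_one_le₀ (one_le_pow₀ hβ : 1 ≤ β ^ n)]
      rcases (by omega : ⌊β * y⌋ = d ∨ ⌊β * y⌋ = d + 1) with h | h
      · have hT : bT β y = β * y - d := by rw [bT_eq_sub_floor, h]
        refine Or.inl ⟨bT β y, ⟨⟨?_, ?_⟩, hy⟩, ?_⟩
        · rw [hT]; gcongr
        · rw [hT]; linarith
        · rw [hT]; field_simp; ring
      · have hT : bT β y = β * y - (d + 1) := by rw [bT_eq_sub_floor, h]; push_cast; ring
        have hsmall : β ^ n * bT β y < 1 := by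
          have hlt : bT β y < (β ^ n)⁻¹ := by rw [hT]; linarith
          calc β ^ n * bT β y < β ^ n * (β ^ n)⁻¹ := by gcongr
            _ = 1 := mul_inv_cancel₀ (by positivity)
        have h0 := eq_zero_of_iterate_bT_eq_zero hβ (bT_mem_Ico y).1 hsmall hy
        refine Or.inr (eq_div_of_mul_eq hβ0.ne' ?_)
        linarith
    calc _ ≤ _ := encard_le_encard hsub
      _ ≤ _ := encard_union_le _ _
      _ ≤ (n + 1) + 1 := add_le_add ((encard_image_le _ _).trans (ih hgap)) (by simp)
      _ = ((n + 1 : ℕ) : ℕ∞) + 1 := by push_cast; rfl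

noncomputable def word (β : ℝ) (n : ℕ) (x : ℝ) : List ℤ := (List.range n).map (dig β x)

lemma word_length (n : ℕ) (x : ℝ) : (word β n x).length = n := by simp [word]

lemma dig_eq_word_get (n : ℕ) (x : ℝ) (i : Fin (word β n x).length) :
    dig β x i = (word β n x).get i := by
  rw [List.get_eq_getElem]
  simp [word]

lemma mem_cyl_word (n : ℕ) {x : ℝ} (hx : x ∈ Ico (0 : ℝ) 1) : x ∈ cyl β (word β n x) :=
  ⟨hx, dig_eq_word_get n x⟩

lemma word_mem_SigmaB (n : ℕ) {x : ℝ} (hx : x ∈ Ico (0 : ℝ) 1) : word β n x ∈ SigmaB β n :=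
  ⟨word_length n x, x, hx, dig_eq_word_get n x⟩

lemma word_partialExp (hβ : 0 < β) (n : ℕ) (x : ℝ) : word β n (partialExp β n x) = word β n x :=
  List.map_congr_left fun _ hi => dig_partialExp hβ x (List.mem_range.1 hi)

theorem encard_image_word_le (hβ : 1 ≤ β) (n : ℕ) {a b : ℝ} (hab : b - a ≤ (β ^ n)⁻¹)
    (hJ : Ico a b ⊆ Ico (0 : ℝ) 1) : (word β n '' Ico a b).encard ≤ 2 * (n + 1) := by
  have hβ0 : 0 < β := zero_lt_one.trans_le hβ
  have hwords : word β n '' Ico a b = word β n '' (partialExp β n '' Ico a b) := by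
    rw [image_image]
    exact image_congr fun x _ => (word_partialExp hβ0 n x).symm
  have hends : partialExp β n '' Ico a b ⊆ {y ∈ Ico (a - (β ^ n)⁻¹) a | (bT β)^[n] y = 0} ∪
      {y ∈ Ico a b | (bT β)^[n] y = 0} := by
    rintro _ ⟨x, hx, rfl⟩
    have hlo := sub_partialExp_lt hβ0 (hJ hx) n
    have hhi := partialExp_le hβ0 (hJ hx) n
    have hzero := iterate_bT_partialExp hβ0 n x
    rcases lt_or_ge (partialExp β n x) a with h | h
    · exact Or.inl ⟨⟨by linarith [hx.1], h⟩, hzero⟩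
    · exact Or.inr ⟨⟨h, hhi.trans_lt hx.2⟩, hzero⟩
  calc (word β n '' Ico a b).encard
      ≤ (partialExp β n '' Ico a b).encard := hwords ▸ encard_image_le _ _
    _ ≤ _ := (encard_le_encard hends).trans (encard_union_le _ _)
    _ ≤ (n + 1) + (n + 1) :=
      add_le_add (encard_zeros_iterate_bT_le hβ n (by linarith))
        (encard_zeros_iterate_bT_le hβ n hab)
    _ = 2 * (n + 1) := by ring

end BetaTransformation

open BetaTransformation

theorem stmt7_general (β : ℝ) (hβ : 1 < β) (l : ℕ) (a b : ℝ)
    (hab : b - a = (β ^ l)⁻¹) (hJ : Set.Ico a b ⊆ Set.Ico (0:ℝ) 1) :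
    ∃ F : Finset (List ℤ), F.card ≤ 2 * (l + 1) ∧ (∀ w ∈ F, w ∈ SigmaB β l) ∧
      Set.Ico a b ⊆ ⋃ w ∈ F, cyl β w := by
  have hcard := encard_image_word_le hβ.le l hab.le hJ
  have hfin : (word β l '' Ico a b).Finite := finite_of_encard_le_coe (by exact_mod_cast hcard)
  refine ⟨hfin.toFinset, ?_, ?_, ?_⟩
  · rw [hfin.encard_eq_coe_toFinset_card] at hcard
    exact_mod_cast hcard
  · intro w hw
    obtain ⟨x, hx, rfl⟩ := hfin.mem_toFinset.1 hw
    exact word_mem_SigmaB l (hJ hx)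
  · intro x hx
    exact mem_biUnion (hfin.mem_toFinset.2 (mem_image_of_mem _ hx)) (mem_cyl_word l (hJ hx))

theorem stmt7 (β : ℝ) (hβ : 1 < β) (l : ℕ) (hl : 1 ≤ l) (a b : ℝ)
    (hab : b - a = (β ^ l)⁻¹) (hJ : Set.Ico a b ⊆ Set.Ico (0:ℝ) 1) :
    ∃ F : Finset (List ℤ), F.card ≤ 2 * (l + 1) ∧ (∀ w ∈ F, w ∈ SigmaB β l) ∧
      Set.Ico a b ⊆ ⋃ w ∈ F, cyl β w :=
  stmt7_general β hβ l a b hab hJ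
end
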